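/- arXiv:0707.3151 — 2 statements merged into one kernel-verified Lean document; each statement's English description precedes it below -/
import Mathlib

section
/- (Second Commutator Formula) Let R be a commutative ring, f ∈ R[X₂], g ∈ R[X₁], b ∈ R, and let ψ = (X₁ + f(X₂), X₂) and ε = (X₁, X₂ + b g(X₁)) be elementary automorphisms of R[X₁,X₂]. Then with Y a new variable, (ψ ε ψ⁻¹)^{[1]} = γ ω γ⁻¹ ω⁻¹ in GA₃(R), where γ = (X₁ + f(X₂+bY) - f(X₂), X₂ + bY, Y) and ω = (X₁, X₂, Y + g(X₁ - f(X₂))). -/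
/-!
`X₁, X₂, Y` are `X 0, X 1, X 2`; automorphisms compose as algebra maps, so the geometric
`ψ ε ψ⁻¹` is `ψ⁻¹ * ε * ψ`.

Put `u = X₁ - f(X₂)` and `h = g(u)`. Then `ψ⁻¹ * ε * ψ = (X₁ - f(X₂) + f(X₂ + b h), X₂ + b h, Y)`.
Both `γ` and `ω` fix `u`, hence `h`, so on the generators one checks `γ * ω * (ψ⁻¹ * ε * ψ) = ω * γ`:
both sides send `X₁` to `X₁ + f(X₂ + b (Y + h)) - f(X₂)`, `X₂` to `X₂ + b (Y + h)` and `Y` to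
`Y + h`.
-/

open MvPolynomial

noncomputable section

namespace AlgEquiv

variable {R A : Type*} [CommSemiring R]

theorem inv_apply_eq_sub_of_apply_eq_add [Ring A] [Algebra R A] (σ : A ≃ₐ[R] A) {x p : A}
    (hp : σ p = p) (hx : σ x = x + p) : σ⁻¹ x = x - p :=
  σ.symm_apply_eq.mpr <| by rw [map_sub, hx, hp, add_sub_cancel_right]

theorem apply_aeval_eq_of_apply_eq [Semiring A] [Algebra R A] (σ : A ≃ₐ[R] A) {x : A}
    (hx : σ x = x) (p : Polynomial R) : σ (Polynomial.aeval x p) = Polynomial.aeval x p := by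
  rw [← Polynomial.aeval_algHom_apply, hx]

end AlgEquiv

namespace MvPolynomial

variable {σ R : Type*} [CommSemiring R]

theorem algEquiv_ext {A : Type*} [Semiring A] [Algebra R A] {e₁ e₂ : MvPolynomial σ R ≃ₐ[R] A}
    (h : ∀ i, e₁ (X i) = e₂ (X i)) : e₁ = e₂ :=
  AlgEquiv.coe_toAlgHom_injective (algHom_ext h)

theorem algEquiv_C (e : MvPolynomial σ R ≃ₐ[R] MvPolynomial σ R) (r : R) : e (C r) = C r :=
  e.commutes r

end MvPolynomial

section ElementaryAutomorphisms

variable {R : Type*} [CommRing R] {f g : Polynomial R} {b : R}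
  {ψ ε γ ω δ : MvPolynomial (Fin 3) R ≃ₐ[R] MvPolynomial (Fin 3) R}

theorem conj_elementary_apply_X
    (hψ0 : ψ (X 0) = X 0 + Polynomial.aeval (X 1) f) (hψ1 : ψ (X 1) = X 1)
    (hψ2 : ψ (X 2) = X 2) (hε0 : ε (X 0) = X 0)
    (hε1 : ε (X 1) = X 1 + C b * Polynomial.aeval (X 0) g) (hε2 : ε (X 2) = X 2) :
    (ψ⁻¹ * ε * ψ) (X 0) = X 0 - Polynomial.aeval (X 1) f +
        Polynomial.aeval (X 1 + C b * Polynomial.aeval (X 0 - Polynomial.aeval (X 1) f) g) f ∧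
      (ψ⁻¹ * ε * ψ) (X 1) = X 1 + C b * Polynomial.aeval (X 0 - Polynomial.aeval (X 1) f) g ∧
      (ψ⁻¹ * ε * ψ) (X 2) = X 2 := by
  have hψ_inv0 := ψ.inv_apply_eq_sub_of_apply_eq_add (ψ.apply_aeval_eq_of_apply_eq hψ1 f) hψ0
  have hψ_inv1 : ψ⁻¹ (X 1) = X 1 := ψ.symm_apply_eq.mpr hψ1.symm
  have hψ_inv2 : ψ⁻¹ (X 2) = X 2 := ψ.symm_apply_eq.mpr hψ2.symm
  refine ⟨?_, ?_, ?_⟩ <;>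
    simp only [AlgEquiv.mul_apply, hψ0, hψ1, hψ2, hε0, hε1, hε2, hψ_inv0, hψ_inv1, hψ_inv2,
      map_add, map_mul, algEquiv_C, ← Polynomial.aeval_algHom_apply]

theorem mul_mul_eq_mul_of_fixed {h : MvPolynomial (Fin 3) R}
    (hγ0 : γ (X 0) = X 0 + Polynomial.aeval (X 1 + C b * X 2) f - Polynomial.aeval (X 1) f)
    (hγ1 : γ (X 1) = X 1 + C b * X 2) (hγ2 : γ (X 2) = X 2)
    (hω0 : ω (X 0) = X 0) (hω1 : ω (X 1) = X 1) (hω2 : ω (X 2) = X 2 + h)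
    (hγh : γ h = h) (hωh : ω h = h)
    (hδ0 : δ (X 0) = X 0 - Polynomial.aeval (X 1) f + Polynomial.aeval (X 1 + C b * h) f)
    (hδ1 : δ (X 1) = X 1 + C b * h) (hδ2 : δ (X 2) = X 2) :
    γ * ω * δ = ω * γ := by
  refine algEquiv_ext fun i => ?_
  match i with
  | 0 | 1 | 2 =>
    simp only [AlgEquiv.mul_apply, hδ0, hδ1, hδ2, hγ0, hγ1, hγ2, hω0, hω1, hω2, hγh, hωh,
      map_add, map_sub, map_mul, algEquiv_C, ← Polynomial.aeval_algHom_apply] <;> ring_nf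

end ElementaryAutomorphisms

/-- Second Commutator Formula.  In `R[X₁,X₂]` with a new variable `Y` (here `X₁ = X 0`,
`X₂ = X 1`, `Y = X 2`), let `ψ = (X₁ + f(X₂), X₂)` and `ε = (X₁, X₂ + b g(X₁))`.  Then
`(ψ ε ψ⁻¹)^{[1]} = γ ω γ⁻¹ ω⁻¹` (geometric composition; as algebra automorphisms,
`ψ⁻¹ * ε * ψ = ω⁻¹ * γ⁻¹ * ω * γ`), where
`γ = (X₁ + f(X₂+bY) - f(X₂), X₂ + bY, Y)` and `ω = (X₁, X₂, Y + g(X₁ - f(X₂)))`. -/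
theorem second_commutator_formula
    (R : Type*) [CommRing R] (f g : Polynomial R) (b : R)
    (ψ ε γ ω : MvPolynomial (Fin 3) R ≃ₐ[R] MvPolynomial (Fin 3) R)
    (hψ0 : ψ (X 0) = X 0 + Polynomial.aeval (X 1 : MvPolynomial (Fin 3) R) f)
    (hψ1 : ψ (X 1) = X 1) (hψ2 : ψ (X 2) = X 2)
    (hε0 : ε (X 0) = X 0) (hε2 : ε (X 2) = X 2)
    (hε1 : ε (X 1) = X 1 + C b * Polynomial.aeval (X 0 : MvPolynomial (Fin 3) R) g)
    (hγ0 : γ (X 0) = X 0 +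
      Polynomial.aeval (X 1 + C b * X 2 : MvPolynomial (Fin 3) R) f -
      Polynomial.aeval (X 1 : MvPolynomial (Fin 3) R) f)
    (hγ1 : γ (X 1) = X 1 + C b * X 2) (hγ2 : γ (X 2) = X 2)
    (hω0 : ω (X 0) = X 0) (hω1 : ω (X 1) = X 1)
    (hω2 : ω (X 2) = X 2 +
      Polynomial.aeval
        (X 0 - Polynomial.aeval (X 1 : MvPolynomial (Fin 3) R) f) g) :
    ψ⁻¹ * ε * ψ = ω⁻¹ * γ⁻¹ * ω * γ := by
  obtain ⟨hδ0, hδ1, hδ2⟩ := conj_elementary_apply_X hψ0 hψ1 hψ2 hε0 hε1 hε2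
  have hγu : γ (X 0 - Polynomial.aeval (X 1) f) = X 0 - Polynomial.aeval (X 1) f := by
    rw [map_sub, ← Polynomial.aeval_algHom_apply, hγ0, hγ1]
    ring
  have hωu : ω (X 0 - Polynomial.aeval (X 1) f) = X 0 - Polynomial.aeval (X 1) f := by
    rw [map_sub, ← Polynomial.aeval_algHom_apply, hω0, hω1]
  have hrel := mul_mul_eq_mul_of_fixed hγ0 hγ1 hγ2 hω0 hω1 hω2
    (γ.apply_aeval_eq_of_apply_eq hγu g) (ω.apply_aeval_eq_of_apply_eq hωu g) hδ0 hδ1 hδ2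
  rw [mul_assoc _ ω γ, ← hrel]
  group

end
end

section
/- The stable elementary automorphism group EA_∞(R) is perfect: EA_∞(R) = [EA_∞(R), EA_∞(R)], for any commutative ring R. -/
/-!
After one stabilization, the elementary automorphism `X i ↦ X i + f` is the commutator
`⁅a, b⁆` of `a : X z ↦ X z + f` and `b : X i ↦ X i + X z`, where `z` is the new variable:
as `f` involves neither `X i` nor `X z`, one checks on generators that `⁅a, b⁆` sends `X i`
to `X i + f` and fixes every other variable. Stabilization is a group homomorphism, so it
sends all of `EA R n` into the commutator subgroup of `EA R (n + 1)`.
-/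

open MvPolynomial

noncomputable section

/-- An elementary automorphism of the polynomial ring: it adds to one variable `X i`
a polynomial `f` not involving `X i`, and fixes all other variables. -/
def IsElementaryAut {R : Type*} [CommRing R] {n : ℕ}
    (e : MvPolynomial (Fin n) R ≃ₐ[R] MvPolynomial (Fin n) R) : Prop :=
  ∃ (i : Fin n) (f : MvPolynomial (Fin n) R), degreeOf i f = 0 ∧
    e (X i) = X i + f ∧ ∀ j : Fin n, j ≠ i → e (X j) = X j

/-- `EA R n`: the subgroup generated by elementary automorphisms. -/
def EA (R : Type*) [CommRing R] (n : ℕ) :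
    Subgroup (MvPolynomial (Fin n) R ≃ₐ[R] MvPolynomial (Fin n) R) :=
  Subgroup.closure {e | IsElementaryAut e}

/-- A linear automorphism: each variable is sent to a homogeneous polynomial of degree 1. -/
def IsLinearAut {R : Type*} [CommRing R] {n : ℕ}
    (φ : MvPolynomial (Fin n) R ≃ₐ[R] MvPolynomial (Fin n) R) : Prop :=
  ∀ i, (φ (X i)).IsHomogeneous 1

/-- `TA R n`: the subgroup of tame automorphisms, generated by linear and elementary ones. -/
def TA (R : Type*) [CommRing R] (n : ℕ) :
    Subgroup (MvPolynomial (Fin n) R ≃ₐ[R] MvPolynomial (Fin n) R) :=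
  Subgroup.closure ({e | IsElementaryAut e} ∪ {φ | IsLinearAut φ})

/-- The Jacobian determinant of a polynomial automorphism. -/
def jacDet {R : Type*} [CommRing R] {n : ℕ}
    (φ : MvPolynomial (Fin n) R ≃ₐ[R] MvPolynomial (Fin n) R) : MvPolynomial (Fin n) R :=
  Matrix.det (Matrix.of fun i j => pderiv j (φ (X i)))

/-- Stabilization `φ^{[m]}` of an automorphism in `n` variables to one in `n + m` variables:
it acts as `φ` on the first `n` variables and fixes the last `m` variables. -/
def stab (R : Type*) [CommRing R] (n m : ℕ)
    (φ : MvPolynomial (Fin n) R ≃ₐ[R] MvPolynomial (Fin n) R) :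
    MvPolynomial (Fin (n + m)) R ≃ₐ[R] MvPolynomial (Fin (n + m)) R :=
  ((renameEquiv R (((finSumFinEquiv (m := n) (n := m)).symm).trans
      (Equiv.sumComm (Fin n) (Fin m)))).trans
    ((sumAlgEquiv R (Fin m) (Fin n)).trans
      ((mapAlgEquiv (Fin m) φ).trans
        ((sumAlgEquiv R (Fin m) (Fin n)).symm.trans
          (renameEquiv R ((Equiv.sumComm (Fin m) (Fin n)).trans finSumFinEquiv))))))

section Elementary

variable {R σ : Type*} [CommRing R]

theorem aeval_eq_self_of_forall_mem_vars {g : σ → MvPolynomial σ R} {p : MvPolynomial σ R}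
    (h : ∀ j ∈ p.vars, g j = X j) : aeval g p = p :=
  calc aeval g p = aeval X p := eval₂Hom_congr' rfl (fun j hj _ => h j hj) rfl
    _ = p := aeval_X_left_apply p

theorem notMem_vars_iff_degreeOf_eq_zero {i : σ} {p : MvPolynomial σ R} :
    i ∉ p.vars ↔ p.degreeOf i = 0 := by
  rw [mem_vars_iff_degreeOf_ne_zero, not_not]

theorem notMem_vars_X_of_ne {i z : σ} (h : i ≠ z) : i ∉ (X z : MvPolynomial σ R).vars :=
  notMem_vars_iff_degreeOf_eq_zero.mpr (degreeOf_X_of_ne h)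

variable [DecidableEq σ]

def elemHom (i : σ) (f : MvPolynomial σ R) : MvPolynomial σ R →ₐ[R] MvPolynomial σ R :=
  aeval (Function.update X i (X i + f))

variable {i : σ} {f g p : MvPolynomial σ R}

@[simp]
theorem elemHom_X (j : σ) : elemHom i f (X j) = Function.update X i (X i + f) j :=
  aeval_X _ _

theorem elemHom_apply_of_notMem_vars (hp : i ∉ p.vars) : elemHom i f p = p :=
  aeval_eq_self_of_forall_mem_vars fun _ hj =>
    Function.update_of_ne (ne_of_mem_of_not_mem hj hp) _ _

theorem elemHom_zero : elemHom i (0 : MvPolynomial σ R) = AlgHom.id R _ := by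
  rw [elemHom, add_zero, Function.update_eq_self, aeval_X_left]

theorem elemHom_comp_elemHom (hg : i ∉ g.vars) :
    (elemHom i f).comp (elemHom i g) = elemHom i (f + g) := by
  refine algHom_ext fun j => ?_
  rcases eq_or_ne j i with rfl | hj
  · simp [elemHom_apply_of_notMem_vars hg, add_assoc]
  · simp [hj]

def elemAut (i : σ) (f : MvPolynomial σ R) (hf : i ∉ f.vars) :
    MvPolynomial σ R ≃ₐ[R] MvPolynomial σ R :=
  AlgEquiv.ofAlgHom (elemHom i f) (elemHom i (-f))
    (by rw [elemHom_comp_elemHom (by rwa [vars_neg]), add_neg_cancel, elemHom_zero])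
    (by rw [elemHom_comp_elemHom hf, neg_add_cancel, elemHom_zero])

@[simp]
theorem elemAut_apply (hf : i ∉ f.vars) : elemAut i f hf p = elemHom i f p := rfl

@[simp]
theorem elemAut_inv_apply (hf : i ∉ f.vars) : (elemAut i f hf)⁻¹ p = elemHom i (-f) p := rfl

open scoped commutatorElement in
theorem elemAut_eq_commutator {z : σ} (hiz : i ≠ z) (hif : i ∉ f.vars) (hzf : z ∉ f.vars) :
    elemAut i f hif = ⁅elemAut z f hzf, elemAut i (X z) (notMem_vars_X_of_ne hiz)⁆ := by
  refine AlgEquiv.coe_toAlgHom_injective (algHom_ext fun j => ?_)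
  simp only [AlgEquiv.coe_toAlgHom, commutatorElement_def, AlgEquiv.mul_apply, elemAut_apply,
    elemAut_inv_apply]
  rcases eq_or_ne j i with rfl | hji
  · simp [hiz, hiz.symm, elemHom_apply_of_notMem_vars hif, elemHom_apply_of_notMem_vars hzf]
    ring
  rcases eq_or_ne j z with rfl | hjz
  · simp [hiz.symm, elemHom_apply_of_notMem_vars hif, elemHom_apply_of_notMem_vars hzf]
  · simp [hji, hjz]

end Elementary

section Stabilization

variable {R : Type*} [CommRing R]

theorem sumAlgEquiv_symm_C {S₁ S₂ : Type*} (p : MvPolynomial S₂ R) :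
    (sumAlgEquiv R S₁ S₂).symm (C p) = rename Sum.inr p :=
  (AlgEquiv.symm_apply_eq _).mpr (AlgHom.congr_fun (sumAlgEquiv_comp_rename_inr R S₁ S₂) p).symm

variable {n m : ℕ} (φ ψ : MvPolynomial (Fin n) R ≃ₐ[R] MvPolynomial (Fin n) R)

theorem stab_X_castAdd (i : Fin n) :
    stab R n m φ (X (Fin.castAdd m i)) = rename (Fin.castAdd m) (φ (X i)) := by
  simp only [stab, AlgEquiv.trans_apply, renameEquiv_apply, rename_X, Equiv.trans_apply,
    finSumFinEquiv_symm_apply_castAdd, Equiv.sumComm_apply, Sum.swap_inl, sumAlgEquiv_X_inr,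
    mapAlgEquiv_apply, map_C, sumAlgEquiv_symm_C, rename_rename]
  rfl

theorem stab_X_natAdd (j : Fin m) :
    stab R n m φ (X (Fin.natAdd n j)) = X (Fin.natAdd n j) := by
  simp only [stab, AlgEquiv.trans_apply, renameEquiv_apply, rename_X, Equiv.trans_apply,
    finSumFinEquiv_symm_apply_natAdd, Equiv.sumComm_apply, Sum.swap_inr, sumAlgEquiv_X_inl,
    mapAlgEquiv_apply, map_X, sumAlgEquiv_symm_X]
  rfl

theorem stab_rename (p : MvPolynomial (Fin n) R) :
    stab R n m φ (rename (Fin.castAdd m) p) = rename (Fin.castAdd m) (φ p) := by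
  have : (stab R n m φ).toAlgHom.comp (rename (Fin.castAdd m)) =
      (rename (Fin.castAdd m)).comp φ.toAlgHom :=
    algHom_ext fun i => by
      simp only [AlgHom.comp_apply, rename_X, AlgEquiv.toAlgHom_apply]
      exact stab_X_castAdd φ i
  exact AlgHom.congr_fun this p

theorem stab_mul : stab R n m (φ * ψ) = stab R n m φ * stab R n m ψ := by
  refine AlgEquiv.coe_toAlgHom_injective (algHom_ext fun k => ?_)
  refine Fin.addCases (fun i => ?_) (fun j => ?_) k
  · simp [stab_X_castAdd, stab_rename]
  · simp [stab_X_natAdd]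

variable (R n m) in
def stabHom : (MvPolynomial (Fin n) R ≃ₐ[R] MvPolynomial (Fin n) R) →*
    (MvPolynomial (Fin (n + m)) R ≃ₐ[R] MvPolynomial (Fin (n + m)) R) :=
  MonoidHom.mk' (stab R n m) stab_mul

end Stabilization

section Perfect

variable {R : Type*} [CommRing R] {n : ℕ}

theorem Fin.castAdd_ne_natAdd {m : ℕ} (i : Fin n) (k : Fin m) :
    Fin.castAdd m i ≠ Fin.natAdd n k :=
  Fin.ne_of_val_ne (by simp only [Fin.val_castAdd, Fin.val_natAdd]; omega)

theorem castAdd_notMem_vars_rename {m : ℕ} {i : Fin n} {f : MvPolynomial (Fin n) R}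
    (hf : i ∉ f.vars) : Fin.castAdd m i ∉ (rename (Fin.castAdd m) f).vars := fun h => by
  obtain ⟨j, hj, hji⟩ := mem_vars_rename _ _ h
  exact hf (Fin.castAdd_injective n m hji ▸ hj)

theorem natAdd_notMem_vars_rename {m : ℕ} (k : Fin m) (f : MvPolynomial (Fin n) R) :
    Fin.natAdd n k ∉ (rename (Fin.castAdd m) f).vars := fun h => by
  obtain ⟨j, -, hj⟩ := mem_vars_rename _ _ h
  exact Fin.castAdd_ne_natAdd j k hj

theorem elemAut_mem_EA {i : Fin n} {f : MvPolynomial (Fin n) R} (hf : i ∉ f.vars) :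
    elemAut i f hf ∈ EA R n :=
  Subgroup.subset_closure ⟨i, f, notMem_vars_iff_degreeOf_eq_zero.mp hf,
    by simp, fun j hj => by simp [hj]⟩

theorem elemAut_mem_commutator_EA {i z : Fin n} (hiz : i ≠ z) {f : MvPolynomial (Fin n) R}
    (hif : i ∉ f.vars) (hzf : z ∉ f.vars) : elemAut i f hif ∈ ⁅EA R n, EA R n⁆ := by
  rw [elemAut_eq_commutator hiz hif hzf]
  exact Subgroup.commutator_mem_commutator (elemAut_mem_EA _) (elemAut_mem_EA _)

theorem stab_eq_elemAut {m : ℕ} {e : MvPolynomial (Fin n) R ≃ₐ[R] MvPolynomial (Fin n) R}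
    {i : Fin n} {f : MvPolynomial (Fin n) R} (hf : i ∉ f.vars) (hi : e (X i) = X i + f)
    (hj : ∀ j, j ≠ i → e (X j) = X j) :
    stab R n m e = elemAut (Fin.castAdd m i) (rename (Fin.castAdd m) f)
      (castAdd_notMem_vars_rename hf) := by
  refine AlgEquiv.coe_toAlgHom_injective (algHom_ext fun k => ?_)
  refine Fin.addCases (fun j => ?_) (fun j => ?_) k
  · rcases eq_or_ne j i with rfl | hji
    · simp [stab_X_castAdd, hi]
    · simp [stab_X_castAdd, hj j hji, hji]
  · simp [stab_X_natAdd, (Fin.castAdd_ne_natAdd i j).symm]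

theorem EA_le_comap_stabHom_commutator (m : ℕ) :
    EA R n ≤ ⁅EA R (n + (m + 1)), EA R (n + (m + 1))⁆.comap (stabHom R n (m + 1)) := by
  refine Subgroup.closure_le _ |>.mpr fun e ⟨i, f, hdeg, hi, hj⟩ => ?_
  have hf : i ∉ f.vars := notMem_vars_iff_degreeOf_eq_zero.mpr hdeg
  show stab R n (m + 1) e ∈ ⁅EA R (n + (m + 1)), EA R (n + (m + 1))⁆
  rw [stab_eq_elemAut hf hi hj]
  exact elemAut_mem_commutator_EA (Fin.castAdd_ne_natAdd i 0) _ (natAdd_notMem_vars_rename 0 f)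

end Perfect

/-- `EA_∞(R)` is perfect: every product of elementary automorphisms becomes, after adding
some number `m` of extra dimensions, an element of the commutator subgroup
`[EA_{n+m}(R), EA_{n+m}(R)]`. -/
theorem EA_infty_perfect
    (R : Type*) [CommRing R] (n : ℕ)
    (ε : MvPolynomial (Fin n) R ≃ₐ[R] MvPolynomial (Fin n) R) (hε : ε ∈ EA R n) :
    ∃ m : ℕ, stab R n m ε ∈ ⁅EA R (n + m), EA R (n + m)⁆ :=
  ⟨1, EA_le_comap_stabHom_commutator 0 hε⟩

end
end
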